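/- Let $c_1, c_2, \delta > 0$. If $R_{GL} := 64 c_1^7 c_2 \delta^4 - 672 c_1^6 c_2^2 \delta^4 + 1796 c_1^5 c_2^3 \delta^4 - 168 c_1^4 c_2^4 \delta^4 + 4 c_1^3 c_2^5 \delta^4 + 384 c_1^6 c_2 \delta^2 - 400 c_1^5 c_2^2 \delta^2 - 2136 c_1^4 c_2^3 \delta^2 + 96 c_1^3 c_2^4 \delta^2 + 8 c_1^2 c_2^5 \delta^2 - 256 c_1^6 + 544 c_1^5 c_2 - 353 c_1^4 c_2^2 + 100 c_1^3 c_2^3 - 38 c_1^2 c_2^4 + 4 c_1 c_2^5 - c_2^6 < 0$, then $R_{GB} := 4 c_1^7 c_2 \delta^4 - 272 c_1^6 c_2^2 \delta^4 + 4632 c_1^5 c_2^3 \delta^4 - 272 c_1^4 c_2^4 \delta^4 + 4 c_1^3 c_2^5 \delta^4 + 264 c_1^6 c_2 \delta^2 - 2464 c_1^5 c_2^2 \delta^2 - 6096 c_1^4 c_2^3 \delta^2 + 96 c_1^3 c_2^4 \delta^2 + 8 c_1^2 c_2^5 \delta^2 - 81 c_1^6 + 342 c_1^5 c_2 - 559 c_1^4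 c_2^2 + 436 c_1^3 c_2^3 - 159 c_1^2 c_2^4 + 22 c_1 c_2^5 - c_2^6 < 0$. -/
import Mathlib
set_option maxHeartbeats 2000000

noncomputable def RGL (c1 c2 δ : ℝ) : ℝ :=
  64 * c1 ^ 7 * c2 * δ ^ 4 - 672 * c1 ^ 6 * c2 ^ 2 * δ ^ 4 + 1796 * c1 ^ 5 * c2 ^ 3 * δ ^ 4
  - 168 * c1 ^ 4 * c2 ^ 4 * δ ^ 4 + 4 * c1 ^ 3 * c2 ^ 5 * δ ^ 4 + 384 * c1 ^ 6 * c2 * δ ^ 2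
  - 400 * c1 ^ 5 * c2 ^ 2 * δ ^ 2 - 2136 * c1 ^ 4 * c2 ^ 3 * δ ^ 2 + 96 * c1 ^ 3 * c2 ^ 4 * δ ^ 2
  + 8 * c1 ^ 2 * c2 ^ 5 * δ ^ 2 - 256 * c1 ^ 6 + 544 * c1 ^ 5 * c2 - 353 * c1 ^ 4 * c2 ^ 2
  + 100 * c1 ^ 3 * c2 ^ 3 - 38 * c1 ^ 2 * c2 ^ 4 + 4 * c1 * c2 ^ 5 - c2 ^ 6

noncomputable def RGB (c1 c2 δ : ℝ) : ℝ :=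
  4 * c1 ^ 7 * c2 * δ ^ 4 - 272 * c1 ^ 6 * c2 ^ 2 * δ ^ 4 + 4632 * c1 ^ 5 * c2 ^ 3 * δ ^ 4
  - 272 * c1 ^ 4 * c2 ^ 4 * δ ^ 4 + 4 * c1 ^ 3 * c2 ^ 5 * δ ^ 4 + 264 * c1 ^ 6 * c2 * δ ^ 2
  - 2464 * c1 ^ 5 * c2 ^ 2 * δ ^ 2 - 6096 * c1 ^ 4 * c2 ^ 3 * δ ^ 2 + 96 * c1 ^ 3 * c2 ^ 4 * δ ^ 2
  + 8 * c1 ^ 2 * c2 ^ 5 * δ ^ 2 - 81 * c1 ^ 6 + 342 * c1 ^ 5 * c2 - 559 * c1 ^ 4 * c2 ^ 2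
  + 436 * c1 ^ 3 * c2 ^ 3 - 159 * c1 ^ 2 * c2 ^ 4 + 22 * c1 * c2 ^ 5 - c2 ^ 6

/- Auxiliary: dehomogenized coefficient polynomials, in u = √(c2/c1), y = δ²c1. -/
def paP (u : ℝ) : ℝ := 4*u^2*((u^2-5*u+2)*(u^2+5*u+2))^2
def paQ (u : ℝ) : ℝ := 4*u^2*((u^2-6*u+1)*(u^2+6*u+1))^2
def pbP (u : ℝ) : ℝ := 8*u^2*(u^8+12*u^6-267*u^4-50*u^2+48)
def pbQ (u : ℝ) : ℝ := 8*u^2*(u^8+12*u^6-762*u^4-308*u^2+33)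
def pcP (u : ℝ) : ℝ := -(((u^2-1)*(u^4-u^2+16))^2)
def pcQ (u : ℝ) : ℝ := -(((u^2-1)^2*(u^2-9))^2)
def psP (u : ℝ) : ℝ := 4*u^10-84*u^8+620*u^6+2580*u^4-1328*u^2+256
def psQ (u : ℝ) : ℝ := 4*u^10-172*u^8+2120*u^6+6536*u^4-332*u^2+36

lemma psP_pos {u : ℝ} (hu : 0 < u) : 0 < psP u := by
  have e : psP u = u^6*((2*u^2-21)^2+179) + (2580*u^4-1328*u^2+256) := by
    simp only [psP]; ring
  have h1 : 0 ≤ u^6*((2*u^2-21)^2+179) := by positivity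
  have h2 : 0 < 2580*u^4-1328*u^2+256 := by nlinarith [sq_nonneg (2580*u^2-664)]
  linarith [e.ge, e.le]

lemma psQ_pos {u : ℝ} (hu : 0 < u) : 0 < psQ u := by
  have e : psQ u = u^6*((2*u^2-43)^2+271) + (6536*u^4-332*u^2+36) := by
    simp only [psQ]; ring
  have h1 : 0 ≤ u^6*((2*u^2-43)^2+271) := by positivity
  have h2 : 0 < 6536*u^4-332*u^2+36 := by nlinarith [sq_nonneg (6536*u^2-166)]
  linarith [e.ge, e.le]

/-- Main dehomogenized lemma. -/
lemma key (u y : ℝ) (hu : 0 < u) (hy : 0 < y)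
    (hP : paP u * y^2 + pbP u * y + pcP u < 0) :
    paQ u * y^2 + pbQ u * y + pcQ u < 0 := by
  have hsP := psP_pos hu
  have hsQ := psQ_pos hu
  have haP : 0 ≤ paP u := by simp only [paP]; positivity
  have haQ : 0 ≤ paQ u := by simp only [paQ]; positivity
  have hcQ : pcQ u ≤ 0 := by simp only [pcQ]; nlinarith [sq_nonneg ((u^2-1)^2*(u^2-9))]
  set EP : ℝ := u * psP u - (2 * paP u * y + pbP u) with hEPdef
  set FP : ℝ := u * psP u + (2 * paP u * y + pbP u) with hFPdef
  have hEFP : EP * FP = -4 * paP u * (paP u * y^2 + pbP u * y + pcP u) := by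
    simp only [hEPdef, hFPdef, paP, pbP, pcP, psP]; ring
  have hEFPnn : 0 ≤ EP * FP := by nlinarith [mul_nonneg haP (neg_nonneg.2 hP.le)]
  have hsum : EP + FP = 2 * (u * psP u) := by ring
  have husP : 0 < u * psP u := mul_pos hu hsP
  have hEPnn : 0 ≤ EP := by
    rcases le_or_gt 0 EP with h0 | h0
    · exact h0
    · exfalso; nlinarith
  have hFPnn : 0 ≤ FP := by
    rcases le_or_gt 0 FP with h0 | h0
    · exact h0
    · exfalso; nlinarith
  by_cases hgq : u^2 - 6*u + 1 = 0
  · -- degenerate case aQ = 0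
    have haQ0 : paQ u = 0 := by
      simp only [paQ]
      linear_combination (4*u^2*(u^2-6*u+1)*(u^2+6*u+1)^2) * hgq
    have hbQ : pbQ u = u * psQ u := by
      simp only [pbQ, psQ]
      linear_combination (-36*u+48*u^2+656*u^3+1424*u^4+1352*u^5+592*u^6+80*u^7-16*u^8-4*u^9) * hgq
    have hbQpos : 0 < pbQ u := by rw [hbQ]; exact mul_pos hu hsQ
    have hgp5 : u^2-5*u+2 = u+1 := by linarith
    have haPpos : 0 < paP u := by
      simp only [paP]; rw [hgp5]
      have h1 : 0 < (u+1)*(u^2+5*u+2) := by nlinarith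
      have h2 : 0 < 4*u^2 := by positivity
      exact mul_pos h2 (by positivity)
    have hEPpos : 0 < EP := by
      have hprod : 0 < EP * FP := by nlinarith [mul_pos haPpos (neg_pos.2 hP)]
      rcases hEPnn.lt_or_eq with h0 | h0
      · exact h0
      · exfalso; rw [← h0] at hprod; simp at hprod
    have hW2 : pbQ u * (u * psP u - pbP u) + 2 * paP u * pcQ u
        = 28354090631168 - 165259750932480*u := by
      simp only [pbQ, psP, pbP, paP, pcQ]
      linear_combination ((-28354090631168:ℝ)-4864792854528*u-834666506368*u^2-143206116096*u^3-24570138944*u^4-4215698944*u^5-723825096*u^6-124858896*u^7-21346328*u^8-1292448*u^9+3098104*u^10+2478096*u^11+992360*u^12+141632*u^13-81176*u^14-46320*u^15-2824*u^16+1888*u^17+360*u^18-16*u^19-8*u^20) * hgq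
    have hA : ((165259750932480:ℝ)*u - 28354090631168) * (165259750932480*(6-u) - 28354090631168)
        = 43083263622774784 := by
      linear_combination (-(165259750932480:ℝ)^2) * hgq
    have hApos : 0 < (165259750932480:ℝ)*u - 28354090631168 := by
      by_contra h0
      push_neg at h0
      have hB : 0 < (165259750932480:ℝ)*(6-u) - 28354090631168 := by linarith
      nlinarith [mul_nonneg (neg_nonneg.2 h0) hB.le]
    have hy2 : 2 * paP u * y < u * psP u - pbP u := by
      simp only [hEPdef] at hEPpos; linarith
    have hQ : paQ u * y^2 + pbQ u * y + pcQ u = pbQ u * y + pcQ u := by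
      rw [haQ0]; ring
    rw [hQ]
    have hmul : pbQ u * (2 * paP u * y) < pbQ u * (u * psP u - pbP u) :=
      mul_lt_mul_of_pos_left hy2 hbQpos
    nlinarith [hmul, hW2, hApos, haPpos]
  · by_cases hgp : u^2 - 5*u + 2 = 0
    · -- degenerate case aP = 0
      have haP0 : paP u = 0 := by
        simp only [paP]
        linear_combination (4*u^2*(u^2-5*u+2)*(u^2+5*u+2)^2) * hgp
      have hbP : pbP u = u * psP u := by
        simp only [pbP, psP]
        linear_combination (-128*u-128*u^2+408*u^3+884*u^4+716*u^5+280*u^6+32*u^7-12*u^8-4*u^9) * hgp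
      have hu1 : u^2 - 1 ≠ 0 := by
        intro h1; nlinarith [h1, hgp]
      have hu9 : u^2 - 9 ≠ 0 := by
        intro h9; nlinarith [h9, hgp]
      have hcQne : (u^2-1)^2*(u^2-9) ≠ 0 :=
        mul_ne_zero (pow_ne_zero 2 hu1) hu9
      have hcQneg : pcQ u < 0 := by
        have h2 : 0 < ((u^2-1)^2*(u^2-9))^2 :=
          (sq_nonneg ((u^2-1)^2*(u^2-9))).lt_of_ne (Ne.symm (pow_ne_zero 2 hcQne))
        simp only [pcQ]; linarith
      have hcPne : (u^2-1)*(u^4-u^2+16) ≠ 0 :=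
        mul_ne_zero hu1 (by nlinarith [sq_nonneg (2*u^2-1)])
      have hcPneg : pcP u < 0 := by
        have h2 : 0 < ((u^2-1)*(u^4-u^2+16))^2 :=
          (sq_nonneg ((u^2-1)*(u^4-u^2+16))).lt_of_ne (Ne.symm (pow_ne_zero 2 hcPne))
        simp only [pcP]; linarith
      have hPv' : u * psP u * y + pcP u < 0 := by
        have h' := hP
        rw [haP0, hbP] at h'
        nlinarith [h']
      have hW1 : paQ u * pcP u^2 - pbQ u * pcP u * (u * psP u) + pcQ u * (u * psP u)^2
          = 145639149869449474048 - 332170336871037112320*u := by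
        simp only [paQ, pbQ, pcP, pcQ, psP]
        linear_combination ((-72819574934724737024:ℝ)-15963768901293286400*u-3499634785873370624*u^2-767202514028132608*u^3-168188892104372096*u^4-36870973390862912*u^5-8082987493867104*u^6-1771981454103248*u^7-388459611551128*u^8-85158882634580*u^9-18668533334284*u^10-4094170970276*u^11-899004467308*u^12-195917249932*u^13-42107096564*u^14-9448105772*u^15-2199061164*u^16-622571336*u^17-62620792*u^18+98369688*u^19+42356488*u^20-4766168*u^21-6297288*u^22-3012904*u^23+1093776*u^24+906716*u^25+13380*u^26-80820*u^27-10076*u^28+2660*u^29+604*u^30-28*u^31-12*u^32) * hgp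
      have hA1 : ((332170336871037112320:ℝ)*u - 145639149869449474048)
          * (332170336871037112320*(5-u) - 145639149869449474048)
          = 56979404783429308911714304 := by
        linear_combination (-(332170336871037112320:ℝ)^2) * hgp
      have hA1pos : 0 < (332170336871037112320:ℝ)*u - 145639149869449474048 := by
        by_contra h0
        push_neg at h0
        have hB : 0 < (332170336871037112320:ℝ)*(5-u) - 145639149869449474048 := by linarith
        nlinarith [mul_nonneg (neg_nonneg.2 h0) hB.le]
      -- convexity argument with z = (u sP) y
      set D : ℝ := u * psP u with hDdef
      have hD : 0 < D := husP
      have hz : 0 < D * y := mul_pos hD hy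
      have hzlt : D * y < -pcP u := by linarith [hPv']
      have hQD : (paQ u * y^2 + pbQ u * y + pcQ u) * D^2
          = paQ u * (D*y)^2 + (pbQ u * D) * (D*y) + pcQ u * D^2 := by ring
      have hstep : paQ u * (D*y)^2 ≤ paQ u * (-pcP u) * (D*y) := by
        have := mul_le_mul_of_nonneg_left hzlt.le (mul_nonneg haQ hz.le)
        nlinarith [this]
      have hTtot : (paQ u * y^2 + pbQ u * y + pcQ u) * D^2
          ≤ (D*y) * (paQ u * (-pcP u) + pbQ u * D) + pcQ u * D^2 := by
        rw [hQD]; nlinarith [hstep]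
      have hfinal : (paQ u * y^2 + pbQ u * y + pcQ u) * D^2 < 0 := by
        rcases le_or_gt (paQ u * (-pcP u) + pbQ u * D) 0 with hT | hT
        · have : (D*y) * (paQ u * (-pcP u) + pbQ u * D) ≤ 0 :=
            mul_nonpos_of_nonneg_of_nonpos hz.le hT
          nlinarith [mul_pos (mul_pos hD hD) (neg_pos.2 hcQneg)]
        · have h2 : (D*y) * (paQ u * (-pcP u) + pbQ u * D)
              < (-pcP u) * (paQ u * (-pcP u) + pbQ u * D) :=
            mul_lt_mul_of_pos_right hzlt hT
          have h3 : (-pcP u) * (paQ u * (-pcP u) + pbQ u * D) + pcQ u * D^2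
              = paQ u * pcP u^2 - pbQ u * pcP u * D + pcQ u * D^2 := by ring
          linarith [hTtot, h2, h3.le, h3.ge, hW1, hA1pos]
      nlinarith [hfinal, mul_pos hD hD]
    · -- main case : aP > 0 and aQ > 0
      have haPpos : 0 < paP u := by
        simp only [paP]
        have h1 : (u^2-5*u+2)*(u^2+5*u+2) ≠ 0 :=
          mul_ne_zero hgp (by nlinarith)
        have h2 : 0 < ((u^2-5*u+2)*(u^2+5*u+2))^2 :=
          (sq_nonneg _).lt_of_ne (Ne.symm (pow_ne_zero 2 h1))
        have h3 : 0 < 4*u^2 := by positivity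
        exact mul_pos h3 h2
      have haQpos : 0 < paQ u := by
        simp only [paQ]
        have h1 : (u^2-6*u+1)*(u^2+6*u+1) ≠ 0 :=
          mul_ne_zero hgq (by nlinarith)
        have h2 : 0 < ((u^2-6*u+1)*(u^2+6*u+1))^2 :=
          (sq_nonneg _).lt_of_ne (Ne.symm (pow_ne_zero 2 h1))
        have h3 : 0 < 4*u^2 := by positivity
        exact mul_pos h3 h2
      have hprod : 0 < EP * FP := by nlinarith [mul_pos haPpos (neg_pos.2 hP)]
      have hEPpos : 0 < EP := by
        rcases hEPnn.lt_or_eq with h0 | h0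
        · exact h0
        · exfalso; rw [← h0] at hprod; simp at hprod
      set EQ : ℝ := u * psQ u - (2 * paQ u * y + pbQ u) with hEQdef
      set FQ : ℝ := u * psQ u + (2 * paQ u * y + pbQ u) with hFQdef
      have hG : paP u * EQ - paQ u * EP
          = u^3*(u-1)^2*(u^2-6*u+1)^2*(u^2-5*u+2)^2
            *(320+2240*u+5056*u^2+5248*u^3+2752*u^4+704*u^5+64*u^6) := by
        simp only [hEQdef, hEPdef, paP, paQ, pbP, pbQ, psP, psQ]; ring
      have hGnn : 0 ≤ u^3*(u-1)^2*(u^2-6*u+1)^2*(u^2-5*u+2)^2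
            *(320+2240*u+5056*u^2+5248*u^3+2752*u^4+704*u^5+64*u^6) := by
        have hK : 0 ≤ 320+2240*u+5056*u^2+5248*u^3+2752*u^4+704*u^5+64*u^6 := by
          nlinarith [pow_nonneg hu.le 2, pow_nonneg hu.le 3, pow_nonneg hu.le 4,
            pow_nonneg hu.le 5, pow_nonneg hu.le 6, hu.le]
        have hu3 : 0 ≤ u^3 := pow_nonneg hu.le 3
        exact mul_nonneg (mul_nonneg (mul_nonneg (mul_nonneg hu3 (sq_nonneg _)) (sq_nonneg _)) (sq_nonneg _)) hK
      have hEQpos : 0 < EQ := by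
        have h1 : 0 < paP u * EQ := by nlinarith [mul_pos haQpos hEPpos]
        by_contra h0
        push_neg at h0
        nlinarith [mul_nonneg haPpos.le (neg_nonneg.2 h0)]
      have hid : (u * psQ u - pbQ u) * (u * psQ u + pbQ u) = -4 * paQ u * pcQ u := by
        simp only [paQ, pbQ, pcQ, psQ]; ring
      have hidnn : 0 ≤ -4 * paQ u * pcQ u := by nlinarith [mul_nonneg haQ (neg_nonneg.2 hcQ)]
      have husQ : 0 < u * psQ u := mul_pos hu hsQ
      have hbound : 0 ≤ u * psQ u + pbQ u := by
        by_contra h0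
        push_neg at h0
        have h1 : 0 < u * psQ u - pbQ u := by linarith
        nlinarith [mul_pos h1 (neg_pos.2 h0)]
      have hFQpos : 0 < FQ := by
        have h2 : 0 < 2 * paQ u * y := by positivity
        simp only [hFQdef]; linarith
      have hEFQ : EQ * FQ = -4 * paQ u * (paQ u * y^2 + pbQ u * y + pcQ u) := by
        simp only [hEQdef, hFQdef, paQ, pbQ, pcQ, psQ]; ring
      nlinarith [mul_pos hEQpos hFQpos, haQpos]

theorem stmt8 (c1 c2 δ : ℝ) (hc1 : 0 < c1) (hc2 : 0 < c2) (hδ : 0 < δ)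
    (h : RGL c1 c2 δ < 0) : RGB c1 c2 δ < 0 := by
  have hx : 0 < c2/c1 := div_pos hc2 hc1
  set u : ℝ := Real.sqrt (c2/c1) with hudef
  have hu0 : 0 < u := Real.sqrt_pos.mpr hx
  have hu2 : u^2 = c2/c1 := Real.sq_sqrt hx.le
  have hc2' : c2 = c1*u^2 := by rw [hu2]; field_simp
  set y : ℝ := δ^2*c1 with hydef
  have hy0 : 0 < y := by positivity
  have hL : RGL c1 c2 δ = c1^6*(paP u*y^2 + pbP u*y + pcP u) := by
    rw [hc2', hydef]; simp only [RGL, paP, pbP, pcP]; ring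
  have hB : RGB c1 c2 δ = c1^6*(paQ u*y^2 + pbQ u*y + pcQ u) := by
    rw [hc2', hydef]; simp only [RGB, paQ, pbQ, pcQ]; ring
  have h6 : (0:ℝ) < c1^6 := by positivity
  have hPv : paP u*y^2 + pbP u*y + pcP u < 0 := by
    rw [hL] at h
    by_contra h0
    push_neg at h0
    nlinarith [mul_nonneg h6.le h0]
  have hkey := key u y hu0 hy0 hPv
  rw [hB]
  exact mul_neg_of_pos_of_neg h6 hkey
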